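/- arXiv:2605.25897 — 2 statements merged into one kernel-verified Lean document; each statement's English description precedes it below -/
import Mathlib

section
/- Let X₁, X₂, … be i.i.d. real random variables with CDF F and E|X₁| < ∞, and let 𝔽_n denote the empirical CDF of X₁, …, X_n. Then for every fixed positive integer m and every j ∈ {1, …, m}, the L-statistic μ̂_{j:m} := ∫₀¹ 𝔽_n^{-1}(u) f_{B_{j:m}}(u) du converges almost surely, as n → ∞, to μ_{j:m}(F) = ∫₀¹ F^{-1}(u) f_{B_{j:m}}(u) du. -/
open MeasureTheory Filter Set
open scoped BoundedContinuousFunction ProbabilityTheory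

noncomputable section

/-- Density of the Beta(j, m-j+1) distribution. -/
def betaDens (m j : ℕ) (u : ℝ) : ℝ :=
  (m : ℝ) * ((m - 1).choose (j - 1) : ℝ) * u ^ (j - 1) * (1 - u) ^ (m - j)

/-- Quantile function (left-continuous generalized inverse). -/
def quantile (G : ℝ → ℝ) (p : ℝ) : ℝ :=
  sInf {x : ℝ | p ≤ G x}

/-- `G` is a cumulative distribution function on ℝ. -/
structure IsCDF (G : ℝ → ℝ) : Prop where
  mono : Monotone G
  rightCont : ∀ x, ContinuousWithinAt G (Ici x) x
  tendsto_atBot : Tendsto G atBot (nhds 0)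
  tendsto_atTop : Tendsto G atTop (nhds 1)

/-- `G` has finite mean: its quantile function is integrable on (0,1). -/
def HasFiniteMean (G : ℝ → ℝ) : Prop :=
  IntegrableOn (fun u => quantile G u) (Ioo (0:ℝ) 1)

/-- Expected j-th order statistic from a sample of size m drawn from G. -/
def muOS (m j : ℕ) (G : ℝ → ℝ) : ℝ :=
  ∫ u in Ioo (0:ℝ) 1, quantile G u * betaDens m j u

/-- The Hoeffding CDF operator `H_m`. -/
def hoeffCDF (m : ℕ) (G : ℝ → ℝ) (x : ℝ) : ℝ :=
  (m : ℝ)⁻¹ * ∑ j ∈ Finset.Icc 1 m, if muOS m j G ≤ x then (1:ℝ) else 0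

/-- The quantile-Hoeffding operator `I_m`. -/
def quantHoeff (m : ℕ) (h : ℝ → ℝ) (u : ℝ) : ℝ :=
  ∑ j ∈ Finset.Icc 1 m,
    (∫ t in Ioo (0:ℝ) 1, h t * betaDens m j t) *
      (if u ∈ Ioc (((j : ℝ) - 1) / m) ((j : ℝ) / m) then (1:ℝ) else 0)

/-- Empirical CDF of the reals `x 0, ..., x (n-1)`. -/
def ecdf (n : ℕ) (x : ℕ → ℝ) (t : ℝ) : ℝ :=
  (n : ℝ)⁻¹ * ∑ i ∈ Finset.range n, if x i ≤ t then (1:ℝ) else 0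

/-- Empirical CDF of the random sample `X 0, ..., X (n-1)`. -/
def empCDF {Ω : Type*} (X : ℕ → Ω → ℝ) (n : ℕ) (ω : Ω) : ℝ → ℝ :=
  fun t => (n : ℝ)⁻¹ * ∑ i ∈ Finset.range n, if X i ω ≤ t then (1:ℝ) else 0

/-! With `w = f_{B_{j:m}}`, which is bounded on `(0, 1)`, the statistic is `∫₀¹ Qₙ w` where `Qₙ`
is the quantile function of the empirical measure. By the strong law of large numbers, almost
surely `𝔽ₙ(q) → F(q)` at every rational `q` and `(1/n) ∑ |Xᵢ| → E|X₁|`. The first gives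
`Qₙ(u) → F⁻¹(u)` at every continuity point of the monotone `F⁻¹`, hence for almost every `u`;
the quantile transform (`F⁻¹` pushes the uniform law on `(0, 1)` to the law of `X₁`) turns the
second into `∫₀¹ |Qₙ| → ∫₀¹ |F⁻¹|`. Scheffé's lemma then gives `Qₙ → F⁻¹` in `L¹(0, 1)`, and the
bounded weight passes to the limit. -/

open ProbabilityTheory
open scoped Topology ENNReal

section Scheffe

variable {α : Type*} [MeasurableSpace α] {μ : Measure α} {f : ℕ → α → ℝ} {g : α → ℝ}

/-- Scheffé's lemma. -/
theorem tendsto_integral_abs_sub_of_tendsto_integral_abs (hf : ∀ n, Integrable (f n) μ)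
    (hg : Integrable g μ) (hfg : ∀ᵐ x ∂μ, Tendsto (fun n => f n x) atTop (𝓝 (g x)))
    (habs : Tendsto (fun n => ∫ x, |f n x| ∂μ) atTop (𝓝 (∫ x, |g x| ∂μ))) :
    Tendsto (fun n => ∫ x, |f n x - g x| ∂μ) atTop (𝓝 0) := by
  -- `|f n - g| - |f n|` is dominated by `|g|` and tends to `-|g|`.
  have hdom : Tendsto (fun n => ∫ x, (|f n x - g x| - |f n x|) ∂μ) atTop
      (𝓝 (∫ x, -|g x| ∂μ)) := by
    refine tendsto_integral_of_dominated_convergence (fun x => |g x|)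
      (fun n => (((hf n).sub hg).abs.sub (hf n).abs).aestronglyMeasurable) hg.abs
      (fun n => ae_of_all _ fun x => ?_) ?_
    · simpa using abs_abs_sub_abs_le_abs_sub (f n x - g x) (f n x)
    · filter_upwards [hfg] with x hx
      simpa using (hx.sub_const (g x)).abs.sub hx.abs
  have hsum := hdom.add habs
  rw [integral_neg, neg_add_cancel] at hsum
  refine hsum.congr fun n => ?_
  rw [← integral_add]
  · simp only [sub_add_cancel]
  · exact ((hf n).sub hg).abs.sub (hf n).abs
  · exact (hf n).abs

theorem tendsto_integral_mul_of_tendsto_integral_abs_sub {w : α → ℝ} {C : ℝ}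
    (hf : ∀ n, Integrable (f n) μ) (hg : Integrable g μ) (hw : AEStronglyMeasurable w μ)
    (hwC : ∀ᵐ x ∂μ, |w x| ≤ C) (hfg : Tendsto (fun n => ∫ x, |f n x - g x| ∂μ) atTop (𝓝 0)) :
    Tendsto (fun n => ∫ x, f n x * w x ∂μ) atTop (𝓝 (∫ x, g x * w x ∂μ)) := by
  rw [tendsto_iff_norm_sub_tendsto_zero]
  refine squeeze_zero (fun n => norm_nonneg _) (fun n => ?_) (by simpa using hfg.const_mul C)
  calc ‖∫ x, f n x * w x ∂μ - ∫ x, g x * w x ∂μ‖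
      = ‖∫ x, (f n x - g x) * w x ∂μ‖ := by
        simp only [sub_mul]
        rw [integral_sub ((hf n).mul_bdd hw hwC) (hg.mul_bdd hw hwC)]
    _ ≤ ∫ x, C * |f n x - g x| ∂μ := by
        refine norm_integral_le_of_norm_le (((hf n).sub hg).abs.const_mul C) ?_
        filter_upwards [hwC] with x hx
        rw [Real.norm_eq_abs, abs_mul, mul_comm]
        exact mul_le_mul_of_nonneg_right hx (abs_nonneg _)
    _ = C * ∫ x, |f n x - g x| ∂μ := integral_const_mul C _

end Scheffe

namespace IsCDF

variable {G : ℝ → ℝ} {p : ℝ}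

theorem setOf_le_nonempty (hG : IsCDF G) (hp : p < 1) : {x : ℝ | p ≤ G x}.Nonempty :=
  let ⟨y, hy⟩ := (hG.tendsto_atTop.eventually (eventually_gt_nhds hp)).exists
  ⟨y, hy.le⟩

theorem setOf_le_bddBelow (hG : IsCDF G) (hp : 0 < p) : BddBelow {x : ℝ | p ≤ G x} := by
  obtain ⟨y, hy⟩ := (hG.tendsto_atBot.eventually (eventually_lt_nhds hp)).exists_forall_of_atBot
  exact ⟨y, fun x hx => le_of_not_gt fun hxy => (hy x hxy.le).not_ge hx⟩

theorem le_apply_quantile (hG : IsCDF G) (hp : p ∈ Ioo 0 1) : p ≤ G (quantile G p) := by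
  have hright : ∀ y, quantile G p < y → p ≤ G y := fun y hy =>
    let ⟨_, hs, hsy⟩ := exists_lt_of_csInf_lt (hG.setOf_le_nonempty hp.2) hy
    hs.trans (hG.mono hsy.le)
  exact ge_of_tendsto ((hG.rightCont _).mono Ioi_subset_Ici_self)
    (eventually_nhdsWithin_of_forall hright)

theorem quantile_le_iff (hG : IsCDF G) (hp : p ∈ Ioo 0 1) {x : ℝ} :
    quantile G p ≤ x ↔ p ≤ G x :=
  ⟨fun h => (hG.le_apply_quantile hp).trans (hG.mono h),
    fun h => csInf_le (hG.setOf_le_bddBelow hp.1) h⟩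

theorem monotoneOn_quantile (hG : IsCDF G) : MonotoneOn (quantile G) (Ioo 0 1) :=
  fun _ ha _ hb hab =>
    csInf_le_csInf (hG.setOf_le_bddBelow ha.1) (hG.setOf_le_nonempty hb.2) fun _ hx => hab.trans hx

theorem countable_not_continuousAt_quantile (hG : IsCDF G) :
    {u ∈ Ioo (0 : ℝ) 1 | ¬ContinuousAt (quantile G) u}.Countable := by
  refine hG.monotoneOn_quantile.countable_not_continuousWithinAt.mono fun u ⟨hu, hcont⟩ => ?_
  exact ⟨hu, fun h => hcont (h.continuousAt (Ioo_mem_nhds hu.1 hu.2))⟩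

theorem tendsto_quantile (hG : IsCDF G) {F : ℕ → ℝ → ℝ} (hF : ∀ n, IsCDF (F n))
    (hconv : ∀ q : ℚ, Tendsto (fun n => F n q) atTop (𝓝 (G q))) {u : ℝ} (hu : u ∈ Ioo 0 1)
    (hcont : ContinuousAt (quantile G) u) :
    Tendsto (fun n => quantile (F n) u) atTop (𝓝 (quantile G u)) := by
  rw [tendsto_order]
  constructor
  · intro a ha
    obtain ⟨x, hax, hx⟩ := exists_rat_btwn ha
    have hGx : G x < u := not_le.1 fun h => hx.not_ge ((hG.quantile_le_iff hu).2 h)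
    filter_upwards [(hconv x).eventually (eventually_lt_nhds hGx)] with n hn
    exact hax.trans_le (le_of_not_gt fun h => hn.not_ge (((hF n).quantile_le_iff hu).1 h.le))
  · intro b hb
    have hnear : ∀ᶠ v in 𝓝[>] u, quantile G v < b ∧ v ∈ Ioo u 1 :=
      ((hcont.tendsto.mono_left nhdsWithin_le_nhds).eventually (eventually_lt_nhds hb)).and
        (Ioo_mem_nhdsGT hu.2)
    obtain ⟨v, hvb, hv⟩ := hnear.exists
    obtain ⟨x, hvx, hxb⟩ := exists_rat_btwn hvb
    have hGx : u < G x :=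
      hv.1.trans_le ((hG.quantile_le_iff ⟨hu.1.trans hv.1, hv.2⟩).1 hvx.le)
    filter_upwards [(hconv x).eventually (eventually_gt_nhds hGx)] with n hn
    exact (((hF n).quantile_le_iff hu).2 hn.le).trans_lt hxb

theorem ae_tendsto_quantile (hG : IsCDF G) {F : ℕ → ℝ → ℝ} (hF : ∀ n, IsCDF (F n))
    (hconv : ∀ q : ℚ, Tendsto (fun n => F n q) atTop (𝓝 (G q))) :
    ∀ᵐ u ∂volume.restrict (Ioo (0 : ℝ) 1),
      Tendsto (fun n => quantile (F n) u) atTop (𝓝 (quantile G u)) := by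
  filter_upwards [ae_restrict_mem measurableSet_Ioo,
    ae_restrict_of_ae (hG.countable_not_continuousAt_quantile.ae_notMem volume)] with u hu hcont
  exact hG.tendsto_quantile hF hconv hu (not_not.1 fun h => hcont ⟨hu, h⟩)

end IsCDF

theorem Real.volume_Ioo_inter_Iic {a b c : ℝ} (hc : c ≤ b) :
    volume (Ioo a b ∩ Iic c) = ENNReal.ofReal (c - a) := by
  refine le_antisymm ?_ ?_
  · calc volume (Ioo a b ∩ Iic c) ≤ volume (Ioc a c) := measure_mono fun x hx => ⟨hx.1.1, hx.2⟩
      _ = ENNReal.ofReal (c - a) := Real.volume_Ioc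
  · calc ENNReal.ofReal (c - a) = volume (Ioo a c) := Real.volume_Ioo.symm
      _ ≤ volume (Ioo a b ∩ Iic c) :=
          measure_mono fun x hx => ⟨⟨hx.1, hx.2.trans_le hc⟩, hx.2.le⟩

theorem isCDF_cdf (μ : Measure ℝ) [IsProbabilityMeasure μ] : IsCDF (cdf μ) :=
  ⟨monotone_cdf μ, (cdf μ).right_continuous, tendsto_cdf_atBot μ, tendsto_cdf_atTop μ⟩

section QuantileTransform

variable (μ : Measure ℝ) [IsProbabilityMeasure μ]

theorem aemeasurable_quantile_cdf :
    AEMeasurable (quantile (cdf μ)) (volume.restrict (Ioo 0 1)) :=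
  aemeasurable_restrict_of_monotoneOn measurableSet_Ioo (isCDF_cdf μ).monotoneOn_quantile

theorem map_quantile_cdf : (volume.restrict (Ioo 0 1)).map (quantile (cdf μ)) = μ := by
  refine (Measure.ext_of_Iic μ _ fun t => ?_).symm
  have hpre : quantile (cdf μ) ⁻¹' Iic t ∩ Ioo 0 1 = Ioo 0 1 ∩ Iic (cdf μ t) := by
    ext u
    simp only [mem_inter_iff, mem_preimage, mem_Iic]
    exact ⟨fun ⟨h, hu⟩ => ⟨hu, ((isCDF_cdf μ).quantile_le_iff hu).1 h⟩,
      fun ⟨hu, h⟩ => ⟨((isCDF_cdf μ).quantile_le_iff hu).2 h, hu⟩⟩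
  rw [Measure.map_apply_of_aemeasurable (aemeasurable_quantile_cdf μ) measurableSet_Iic,
    Measure.restrict_apply' measurableSet_Ioo, hpre,
    Real.volume_Ioo_inter_Iic (cdf_le_one μ t), sub_zero, ofReal_cdf]

theorem integral_comp_quantile_cdf {φ : ℝ → ℝ} (hφ : AEStronglyMeasurable φ μ) :
    ∫ u in Ioo 0 1, φ (quantile (cdf μ) u) = ∫ x, φ x ∂μ := by
  rw [← map_quantile_cdf μ] at hφ
  conv_rhs => rw [← map_quantile_cdf μ]
  exact (integral_map (aemeasurable_quantile_cdf μ) hφ).symm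

theorem integrableOn_quantile_cdf_iff :
    IntegrableOn (quantile (cdf μ)) (Ioo 0 1) ↔ Integrable id μ := by
  conv_rhs => rw [← map_quantile_cdf μ]
  exact (integrable_map_measure aestronglyMeasurable_id (aemeasurable_quantile_cdf μ)).symm

end QuantileTransform

theorem tendsto_integral_quantile_cdf_mul {ν : ℕ → Measure ℝ} {μ : Measure ℝ}
    [∀ n, IsProbabilityMeasure (ν n)] [IsProbabilityMeasure μ]
    (hcdf : ∀ q : ℚ, Tendsto (fun n => cdf (ν n) q) atTop (𝓝 (cdf μ q)))
    (hν : ∀ n, Integrable id (ν n)) (hμ : Integrable id μ)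
    (habs : Tendsto (fun n => ∫ x, |x| ∂ν n) atTop (𝓝 (∫ x, |x| ∂μ)))
    {w : ℝ → ℝ} {C : ℝ} (hw : AEStronglyMeasurable w (volume.restrict (Ioo 0 1)))
    (hwC : ∀ u ∈ Ioo (0 : ℝ) 1, |w u| ≤ C) :
    Tendsto (fun n => ∫ u in Ioo (0 : ℝ) 1, quantile (cdf (ν n)) u * w u) atTop
      (𝓝 (∫ u in Ioo (0 : ℝ) 1, quantile (cdf μ) u * w u)) := by
  have hνQ n := (integrableOn_quantile_cdf_iff (ν n)).2 (hν n)
  have hμQ := (integrableOn_quantile_cdf_iff μ).2 hμ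
  refine tendsto_integral_mul_of_tendsto_integral_abs_sub hνQ hμQ hw
    ((ae_restrict_iff' measurableSet_Ioo).2 (ae_of_all _ hwC)) ?_
  refine tendsto_integral_abs_sub_of_tendsto_integral_abs hνQ hμQ
    ((isCDF_cdf μ).ae_tendsto_quantile (fun n => isCDF_cdf (ν n)) hcdf) ?_
  simpa only [integral_comp_quantile_cdf _ continuous_abs.aestronglyMeasurable] using habs

theorem abs_betaDens_le (m j : ℕ) {u : ℝ} (hu : u ∈ Icc (0 : ℝ) 1) :
    |betaDens m j u| ≤ m * (m - 1).choose (j - 1) := by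
  have h₁ : 0 ≤ 1 - u := sub_nonneg.2 hu.2
  rw [betaDens, abs_of_nonneg (by have := hu.1; positivity)]
  calc (m : ℝ) * (m - 1).choose (j - 1) * u ^ (j - 1) * (1 - u) ^ (m - j)
      ≤ m * (m - 1).choose (j - 1) * 1 * 1 := by
        gcongr
        · exact pow_le_one₀ hu.1 hu.2
        · exact pow_le_one₀ h₁ (by linarith [hu.1])
    _ = m * (m - 1).choose (j - 1) := by ring

theorem continuous_betaDens (m j : ℕ) : Continuous (betaDens m j) := by
  unfold betaDens
  fun_prop

theorem tendsto_muOS_cdf {ν : ℕ → Measure ℝ} {μ : Measure ℝ}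
    [∀ n, IsProbabilityMeasure (ν n)] [IsProbabilityMeasure μ]
    (hcdf : ∀ q : ℚ, Tendsto (fun n => cdf (ν n) q) atTop (𝓝 (cdf μ q)))
    (hν : ∀ n, Integrable id (ν n)) (hμ : Integrable id μ)
    (habs : Tendsto (fun n => ∫ x, |x| ∂ν n) atTop (𝓝 (∫ x, |x| ∂μ))) (m j : ℕ) :
    Tendsto (fun n => muOS m j (cdf (ν n))) atTop (𝓝 (muOS m j (cdf μ))) :=
  tendsto_integral_quantile_cdf_mul hcdf hν hμ habs
    (continuous_betaDens m j).aestronglyMeasurable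
    fun _ hu => abs_betaDens_le m j (Ioo_subset_Icc_self hu)

def empiricalMeasure (x : ℕ → ℝ) (n : ℕ) : Measure ℝ :=
  (n : ℝ≥0∞)⁻¹ • ∑ i ∈ Finset.range n, Measure.dirac (x i)

section EmpiricalMeasure

variable (x : ℕ → ℝ) (n : ℕ)

instance : IsProbabilityMeasure (empiricalMeasure x (n + 1)) := by
  constructor
  simp [empiricalMeasure, ENNReal.inv_mul_cancel]

theorem integrable_empiricalMeasure (φ : ℝ → ℝ) : Integrable φ (empiricalMeasure x n) := by
  rcases n.eq_zero_or_pos with rfl | hn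
  · simp [empiricalMeasure]
  refine Integrable.smul_measure ?_ (by simpa using hn.ne')
  exact integrable_finsetSum_measure.2 fun i _ => integrable_dirac enorm_lt_top

theorem integral_empiricalMeasure (φ : ℝ → ℝ) :
    ∫ y, φ y ∂empiricalMeasure x n = (∑ i ∈ Finset.range n, φ (x i)) / n := by
  rw [empiricalMeasure, integral_smul_measure,
    integral_finsetSum_measure fun i _ => integrable_dirac enorm_lt_top]
  simp [integral_dirac, ENNReal.toReal_inv, div_eq_inv_mul]

theorem cdf_empiricalMeasure : ⇑(cdf (empiricalMeasure x (n + 1))) = ecdf (n + 1) x := by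
  ext t
  rw [cdf_eq_real, ← integral_indicator_one measurableSet_Iic, integral_empiricalMeasure, ecdf,
    div_eq_inv_mul]
  simp only [indicator_apply, mem_Iic, Pi.one_apply]

end EmpiricalMeasure

theorem ae_tendsto_integral_empiricalMeasure {Ω : Type*} [MeasurableSpace Ω] {P : Measure Ω}
    {X : ℕ → Ω → ℝ} (hindep : iIndepFun X P) (hident : ∀ i, IdentDistrib (X i) (X 0) P P)
    {φ : ℝ → ℝ} (hφ : Measurable φ) (hint : Integrable φ (P.map (X 0))) :
    ∀ᵐ ω ∂P, Tendsto (fun n => ∫ y, φ y ∂empiricalMeasure (X · ω) n) atTop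
      (𝓝 (∫ y, φ y ∂P.map (X 0))) := by
  simp only [integral_empiricalMeasure]
  rw [integral_map (hident 0).aemeasurable_fst hφ.aestronglyMeasurable]
  exact strong_law_ae_real (fun i => φ ∘ X i)
    ((integrable_map_measure hφ.aestronglyMeasurable (hident 0).aemeasurable_fst).1 hint)
    (fun i j hij => (hindep.indepFun hij).comp hφ hφ) fun i => (hident i).comp hφ

theorem muOS_empCDF_tendsto_ae_general
    {Ω : Type*} [MeasureSpace Ω] [IsProbabilityMeasure (ℙ : Measure Ω)]
    (X : ℕ → Ω → ℝ) (hmeas : ∀ i, Measurable (X i))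
    (hindep : ProbabilityTheory.iIndepFun X ℙ)
    (hident : ∀ i : ℕ, Measure.map (X i) ℙ = Measure.map (X 0) ℙ)
    (hint : Integrable (X 0) ℙ)
    (F : ℝ → ℝ) (hF : ∀ t : ℝ, F t = (ℙ {ω | X 0 ω ≤ t}).toReal)
    (m j : ℕ) :
    ∀ᵐ ω ∂(ℙ : Measure Ω),
      Tendsto (fun n : ℕ => muOS m j (empCDF X n ω)) atTop (nhds (muOS m j F)) := by
  set μ := (ℙ : Measure Ω).map (X 0)
  have : IsProbabilityMeasure μ := Measure.isProbabilityMeasure_map (hmeas 0).aemeasurable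
  have hiid i : IdentDistrib (X i) (X 0) ℙ ℙ :=
    ⟨(hmeas i).aemeasurable, (hmeas 0).aemeasurable, hident i⟩
  have hFμ : F = cdf μ := funext fun t => by
    rw [hF, cdf_eq_real, map_measureReal_apply (hmeas 0) measurableSet_Iic]; rfl
  have hμ : Integrable id μ :=
    (integrable_map_measure aestronglyMeasurable_id (hmeas 0).aemeasurable).2 hint
  have hcdf : ∀ᵐ ω, ∀ q : ℚ, Tendsto (fun n => cdf (empiricalMeasure (X · ω) (n + 1)) q) atTop
      (𝓝 (cdf μ q)) := by
    refine ae_all_iff.2 fun q => ?_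
    filter_upwards [ae_tendsto_integral_empiricalMeasure hindep hiid
      (measurable_one.indicator measurableSet_Iic)
      ((integrable_const 1).indicator measurableSet_Iic)] with ω hω
    simpa only [integral_indicator_one measurableSet_Iic, ← cdf_eq_real]
      using (tendsto_add_atTop_iff_nat 1).2 hω
  filter_upwards [hcdf, ae_tendsto_integral_empiricalMeasure hindep hiid measurable_abs hμ.abs]
    with ω hω_cdf hω_abs
  have hemp n : empCDF X (n + 1) ω = cdf (empiricalMeasure (X · ω) (n + 1)) :=
    (cdf_empiricalMeasure _ _).symm
  rw [← tendsto_add_atTop_iff_nat 1, hFμ]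
  simpa only [hemp] using
    tendsto_muOS_cdf hω_cdf (fun n => integrable_empiricalMeasure _ _ _) hμ
      ((tendsto_add_atTop_iff_nat 1).2 hω_abs) m j

/-- Strong consistency of the estimated expected order statistics:
`μ̂_{j:m} → μ_{j:m}(F)` almost surely as `n → ∞`. -/
theorem muOS_empCDF_tendsto_ae
    {Ω : Type*} [MeasureSpace Ω] [IsProbabilityMeasure (ℙ : Measure Ω)]
    (X : ℕ → Ω → ℝ) (hmeas : ∀ i, Measurable (X i))
    (hindep : ProbabilityTheory.iIndepFun X ℙ)
    (hident : ∀ i : ℕ, Measure.map (X i) ℙ = Measure.map (X 0) ℙ)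
    (hint : Integrable (X 0) ℙ)
    (F : ℝ → ℝ) (hF : ∀ t : ℝ, F t = (ℙ {ω | X 0 ω ≤ t}).toReal)
    (m j : ℕ) (hm : 0 < m) (hj1 : 1 ≤ j) (hjm : j ≤ m) :
    ∀ᵐ ω ∂(ℙ : Measure Ω),
      Tendsto (fun n : ℕ => muOS m j (empCDF X n ω)) atTop (nhds (muOS m j F)) :=
  muOS_empCDF_tendsto_ae_general X hmeas hindep hident hint F hF m j
end
end

section
/- Fix a positive integer m and t ∈ (0,1). For j = 1, …, m let F_{B_{j:m}}(t) = ∫₀^t f_{B_{j:m}}(u) du denote the Beta(j, m−j+1) CDF, and let B be a binomial random variable with m trials and success probability t. Define W_m(t) = ∑_{j=1}^m ∫_{(j−1)/m}^{j/m} [ (1 − F_{B_{j:m}}(t)) · 1{x < t} + F_{B_{j:m}}(t) · 1{x > t} + 1{x = t} ] dx (the probability that a Beta(j, m−j+1) variable lies on the opposite side of t from x, integrated over x). Then W_m(t) = (1/m) · E|B − mt| = (1/m) ∑_{b=0}^m |b − mt| C(m,b) t^b (1−t)^{m−b}, and consequently W_m(t) ≤ √(t(1−t)/m). -/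
open MeasureTheory Filter Set
open scoped BoundedContinuousFunction ProbabilityTheory

noncomputable section

/-- The CDF of the Beta(j, m-j+1) distribution. -/
def betaCDF (m j : ℕ) (t : ℝ) : ℝ := ∫ u in (0:ℝ)..t, betaDens m j u

/-- The function `W_m(t)`: the probability that a Beta(j, m−j+1) variable lies on the
opposite side of `t` from `x`, integrated in `x` over `((j−1)/m, j/m]` and summed over `j`. -/
def Wfun (m : ℕ) (t : ℝ) : ℝ :=
  ∑ j ∈ Finset.Icc 1 m,
    ∫ x in Ioc (((j : ℝ) - 1) / m) ((j : ℝ) / m),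
      ((1 - betaCDF m j t) * (if x < t then (1:ℝ) else 0)
        + betaCDF m j t * (if t < x then (1:ℝ) else 0)
        + (if x = t then (1:ℝ) else 0))

/-!
Write `p_k(t) = C(m,k) t^k (1-t)^(m-k)` for the Bernstein (binomial) weights. The derivatives
of the Bernstein polynomials telescope, so `F_{B_{j:m}}(t) = ∑_{k ≥ j} p_k(t)`. On the `j`-th
cell `((j-1)/m, j/m]` the integrand integrates to `(1 - F_j) |cell ∩ (-∞, t]| + F_j |cell ∩ [t, ∞)|`.
Expanding `1 - F_j = ∑_{k < j} p_k` and `F_j = ∑_{k ≥ j} p_k` and exchanging the sums, `p_k` is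
weighted by the length of `(k/m, 1] ∩ (-∞, t]` plus that of `(0, k/m] ∩ [t, ∞)`, which is
`|k/m - t|`. The bound is Jensen's inequality together with the binomial variance `m t (1 - t)`.
-/

namespace bernsteinPolynomial

variable {R : Type*} [CommRing R]

theorem eval_eq (n ν : ℕ) (x : R) :
    (bernsteinPolynomial R n ν).eval x = n.choose ν * x ^ ν * (1 - x) ^ (n - ν) := by
  simp [bernsteinPolynomial]

theorem derivative_sum_Ico_succ {m i : ℕ} (him : i < m) :
    Polynomial.derivative (∑ ν ∈ Finset.Ico i m, bernsteinPolynomial R m (ν + 1)) =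
      m * bernsteinPolynomial R (m - 1) i := by
  have htop : bernsteinPolynomial R (m - 1) m = 0 := eq_zero_of_lt R (by omega)
  have htel := Finset.sum_Ico_sub (bernsteinPolynomial R (m - 1)) him.le
  rw [htop, zero_sub, ← neg_eq_iff_eq_neg, ← Finset.sum_neg_distrib] at htel
  simp only [Polynomial.derivative_sum, derivative_succ, ← Finset.mul_sum, neg_sub] at htel ⊢
  rw [htel]

theorem sum_eval (n : ℕ) (t : ℝ) :
    ∑ k ∈ Finset.range (n + 1), (bernsteinPolynomial ℝ n k).eval t = 1 := by
  rw [← Polynomial.eval_finsetSum, bernsteinPolynomial.sum, Polynomial.eval_one]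

theorem eval_nonneg {t : ℝ} (ht : t ∈ Icc (0:ℝ) 1) (n k : ℕ) :
    0 ≤ (bernsteinPolynomial ℝ n k).eval t := by
  rw [eval_eq]
  exact mul_nonneg (mul_nonneg (Nat.cast_nonneg _) (pow_nonneg ht.1 _))
    (pow_nonneg (sub_nonneg.2 ht.2) _)

theorem sum_eval_mul_sq_sub (n : ℕ) (t : ℝ) :
    ∑ k ∈ Finset.range (n + 1), (bernsteinPolynomial ℝ n k).eval t * ((k : ℝ) - n * t) ^ 2 =
      n * t * (1 - t) := by
  have h := congrArg (Polynomial.eval t) (variance ℝ n)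
  simp only [Polynomial.eval_finsetSum, Polynomial.eval_mul, Polynomial.eval_pow,
    Polynomial.eval_sub, Polynomial.eval_natCast, Polynomial.eval_X,
    Polynomial.eval_one, nsmul_eq_mul] at h
  rw [← h]
  exact Finset.sum_congr rfl fun k _ => by ring

end bernsteinPolynomial

theorem Finset.sum_range_ite_le_sub {M : Type*} [AddCommGroup M] (f g : ℕ → M) {k n : ℕ}
    (hkn : k ≤ n) :
    ∑ i ∈ range n, (if k ≤ i then f (i + 1) - f i else g (i + 1) - g i) =
      g k - g 0 + (f n - f k) := by
  rw [← sum_range_add_sum_Ico _ hkn,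
    sum_congr rfl fun i hi => if_neg (by simp only [mem_range] at hi; omega),
    sum_congr rfl fun i hi => if_pos (mem_Ico.1 hi).1, sum_range_sub, sum_Ico_sub _ hkn]

theorem betaDens_eq_eval_bernstein {m j : ℕ} (hj : 1 ≤ j) (u : ℝ) :
    betaDens m j u = m * (bernsteinPolynomial ℝ (m - 1) (j - 1)).eval u := by
  rw [betaDens, bernsteinPolynomial.eval_eq, show m - 1 - (j - 1) = m - j by omega]
  ring

theorem betaCDF_eq_sum_bernstein {m j : ℕ} (hj : 1 ≤ j) (hjm : j ≤ m) (t : ℝ) :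
    betaCDF m j t = ∑ k ∈ Finset.Icc j m, (bernsteinPolynomial ℝ m k).eval t := by
  obtain ⟨i, rfl⟩ : ∃ i, j = i + 1 := ⟨j - 1, by omega⟩
  set P := ∑ ν ∈ Finset.Ico i m, bernsteinPolynomial ℝ m (ν + 1)
  have hP' : (fun u => betaDens m (i + 1) u) = fun u => (Polynomial.derivative P).eval u := by
    ext u
    rw [betaDens_eq_eval_bernstein hj, bernsteinPolynomial.derivative_sum_Ico_succ (by omega)]
    simp
  have hP0 : P.eval 0 = 0 := by
    simp [P, Polynomial.eval_finsetSum, bernsteinPolynomial.eval_at_0]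
  have hPt : P.eval t = ∑ k ∈ Finset.Icc (i + 1) m, (bernsteinPolynomial ℝ m k).eval t := by
    rw [← Finset.Ico_add_one_right_eq_Icc, ← Finset.sum_Ico_add', Polynomial.eval_finsetSum]
  rw [betaCDF, hP', intervalIntegral.integral_eq_sub_of_hasDerivAt (fun x _ => P.hasDerivAt x)
    (P.derivative.continuous.intervalIntegrable 0 t), hP0, sub_zero, hPt]

theorem betaCDF_succ_eq_sum_ite {m i : ℕ} (him : i < m) (t : ℝ) :
    betaCDF m (i + 1) t = ∑ k ∈ Finset.range (m + 1),
      if i < k then (bernsteinPolynomial ℝ m k).eval t else 0 := by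
  rw [betaCDF_eq_sum_bernstein (by omega) him, ← Finset.sum_filter]
  congr 1
  ext k
  simp only [Finset.mem_Icc, Finset.mem_filter, Finset.mem_range]
  omega

theorem volume_real_Ioc_inter_Iic {a b : ℝ} (hab : a ≤ b) (t : ℝ) :
    volume.real (Ioc a b ∩ Iic t) = min b t - min a t := by
  rw [Ioc_inter_Iic, Real.volume_real_Ioc]
  grind

theorem volume_real_Ioc_inter_Ici {a b : ℝ} (hab : a ≤ b) (t : ℝ) :
    volume.real (Ioc a b ∩ Ici t) = max b t - max a t := by
  rw [measureReal_congr (ae_eq_refl _ |>.inter Ioi_ae_eq_Ici).symm, Ioc_inter_Ioi,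
    Real.volume_real_Ioc]
  grind

theorem setIntegral_Ioc_oppositeSide {a b : ℝ} (hab : a ≤ b) (p t : ℝ) :
    ∫ x in Ioc a b, ((1 - p) * (if x < t then (1:ℝ) else 0) + p * (if t < x then (1:ℝ) else 0)
        + (if x = t then (1:ℝ) else 0))
      = (1 - p) * (min b t - min a t) + p * (max b t - max a t) := by
  have hsplit : ∀ x, (1 - p) * (if x < t then (1:ℝ) else 0) + p * (if t < x then (1:ℝ) else 0)
      + (if x = t then (1:ℝ) else 0) =
        (Iic t).indicator (fun _ => 1 - p) x + (Ici t).indicator (fun _ => p) x := by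
    intro x
    rcases lt_trichotomy x t with h | rfl | h
    · simp [h, h.le, h.ne, not_le.2 h, not_lt.2 h.le]
    · simp
    · simp [h, h.le, h.ne', not_le.2 h, not_lt.2 h.le]
  have hint : ∀ {s : Set ℝ}, MeasurableSet s → ∀ c : ℝ,
      IntegrableOn (s.indicator fun _ => c) (Ioc a b) := fun hs _ =>
    (integrableOn_const measure_Ioc_lt_top.ne).indicator hs
  simp_rw [hsplit]
  rw [integral_add (hint measurableSet_Iic _) (hint measurableSet_Ici _),
    setIntegral_indicator measurableSet_Iic, setIntegral_indicator measurableSet_Ici,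
    setIntegral_const, setIntegral_const, volume_real_Ioc_inter_Iic hab,
    volume_real_Ioc_inter_Ici hab, smul_eq_mul, smul_eq_mul]
  ring

theorem Wfun_eq_sum_range (m : ℕ) (t : ℝ) :
    Wfun m t = ∑ i ∈ Finset.range m,
      ((1 - betaCDF m (i + 1) t) * (min (((i + 1 : ℕ) : ℝ) / m) t - min ((i : ℝ) / m) t) +
        betaCDF m (i + 1) t * (max (((i + 1 : ℕ) : ℝ) / m) t - max ((i : ℝ) / m) t)) := by
  rw [Wfun, ← Finset.Ico_add_one_right_eq_Icc, Finset.sum_Ico_eq_sum_range, add_tsub_cancel_right]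
  refine Finset.sum_congr rfl fun i _ => ?_
  rw [add_comm 1 i, Nat.cast_add_one, add_sub_cancel_right,
    setIntegral_Ioc_oppositeSide (by gcongr; linarith)]

open Finset in
theorem Wfun_eq_sum_bernstein_mul_abs {m : ℕ} (hm : 0 < m) {t : ℝ} (ht : t ∈ Icc (0:ℝ) 1) :
    Wfun m t = ∑ k ∈ range (m + 1), (bernsteinPolynomial ℝ m k).eval t * |(k : ℝ) / m - t| := by
  set p : ℕ → ℝ := fun k => (bernsteinPolynomial ℝ m k).eval t
  set lo : ℕ → ℝ := fun i => min ((i : ℝ) / m) t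
  set hi : ℕ → ℝ := fun i => max ((i : ℝ) / m) t
  have hcell : ∀ i ∈ range m,
      (1 - betaCDF m (i + 1) t) * (lo (i + 1) - lo i) + betaCDF m (i + 1) t * (hi (i + 1) - hi i) =
        ∑ k ∈ range (m + 1), p k * (if k ≤ i then lo (i + 1) - lo i else hi (i + 1) - hi i) := by
    intro i him
    have hF := betaCDF_succ_eq_sum_ite (mem_range.1 him) t
    have hF' : 1 - betaCDF m (i + 1) t = ∑ k ∈ range (m + 1), if i < k then 0 else p k := by
      rw [hF, ← bernsteinPolynomial.sum_eval m t, ← sum_sub_distrib]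
      exact sum_congr rfl fun k _ => by split_ifs <;> simp [p]
    rw [hF', hF, sum_mul, sum_mul, ← sum_add_distrib]
    refine sum_congr rfl fun k _ => ?_
    split_ifs <;> first | omega | ring
  have hdist : ∀ k ∈ range (m + 1),
      ∑ i ∈ range m, (if k ≤ i then lo (i + 1) - lo i else hi (i + 1) - hi i) =
        |(k : ℝ) / m - t| := by
    intro k hk
    have hm' : (m : ℝ) ≠ 0 := by positivity
    rw [Finset.sum_range_ite_le_sub _ _ (Nat.lt_succ_iff.1 (mem_range.1 hk)),
      ← max_sub_min_eq_abs']
    simp only [lo, hi, Nat.cast_zero, zero_div, div_self hm', max_eq_right ht.1, min_eq_right ht.2]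
    ring
  calc Wfun m t
      = ∑ i ∈ range m, ∑ k ∈ range (m + 1),
          p k * (if k ≤ i then lo (i + 1) - lo i else hi (i + 1) - hi i) :=
        (Wfun_eq_sum_range m t).trans (sum_congr rfl hcell)
    _ = ∑ k ∈ range (m + 1),
          p k * ∑ i ∈ range m, (if k ≤ i then lo (i + 1) - lo i else hi (i + 1) - hi i) := by
        simp_rw [sum_comm (s := range m), mul_sum]
    _ = _ := sum_congr rfl fun k hk => by rw [hdist k hk]

theorem sum_eval_bernstein_mul_abs_le_sqrt {m : ℕ} (hm : 0 < m) {t : ℝ} (ht : t ∈ Icc (0:ℝ) 1) :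
    ∑ k ∈ Finset.range (m + 1), (bernsteinPolynomial ℝ m k).eval t * |(k : ℝ) / m - t| ≤
      √(t * (1 - t) / m) := by
  have hjensen := (convexOn_pow 2).map_sum_le (fun k _ => bernsteinPolynomial.eval_nonneg ht m k)
    (bernsteinPolynomial.sum_eval m t) (fun k _ => abs_nonneg ((k : ℝ) / m - t))
  have hvar : ∑ k ∈ Finset.range (m + 1),
      (bernsteinPolynomial ℝ m k).eval t * ((k : ℝ) / m - t) ^ 2 = t * (1 - t) / m := by
    rw [show t * (1 - t) / m = m * t * (1 - t) / m ^ 2 by field_simp,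
      ← bernsteinPolynomial.sum_eval_mul_sq_sub, Finset.sum_div]
    refine Finset.sum_congr rfl fun k _ => ?_
    field_simp
  refine (le_abs_self _).trans (Real.abs_le_sqrt ?_)
  simpa only [smul_eq_mul, sq_abs, hvar] using hjensen

/-- Binomial representation and bound for `W_m(t)`:
`W_m(t) = (1/m) E|B − mt|` for `B ~ Bin(m, t)`, and `W_m(t) ≤ √(t(1−t)/m)`. -/
theorem Wfun_eq_binomial_and_bound
    (m : ℕ) (hm : 0 < m) (t : ℝ) (ht : t ∈ Ioo (0:ℝ) 1) :
    (Wfun m t = (m : ℝ)⁻¹ * ∑ b ∈ Finset.range (m + 1),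
        |(b : ℝ) - m * t| * (m.choose b : ℝ) * t ^ b * (1 - t) ^ (m - b)) ∧
    Wfun m t ≤ Real.sqrt (t * (1 - t) / m) := by
  have hW := Wfun_eq_sum_bernstein_mul_abs hm (Ioo_subset_Icc_self ht)
  refine ⟨?_, hW ▸ sum_eval_bernstein_mul_abs_le_sqrt hm (Ioo_subset_Icc_self ht)⟩
  rw [hW, Finset.mul_sum]
  refine Finset.sum_congr rfl fun b _ => ?_
  rw [show (b : ℝ) / m - t = (b - m * t) / m by field_simp, abs_div, Nat.abs_cast,
    bernsteinPolynomial.eval_eq]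
  field_simp
end
end
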